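/- Let q ≥ 1 and let A be a symmetric K×K real matrix with eigenvalues λ_1, …, λ_K ordered by decreasing absolute value (|λ_1| ≥ … ≥ |λ_K|). Define R_q(A) := Σ_{i_1,…,i_q pairwise distinct} λ_{i_1}²⋯λ_{i_q}² (R_0(A) := 1) and r_j(A) := Σ_{i ≥ j} λ_i². Then: (1) R_{q−1}(A)·r_q(A) ≤ R_q(A) ≤ q·R_{q−1}(A)·r_q(A); (2) ∏_{i=1}^{q} r_i(A) ≤ R_q(A) ≤ q!·∏_{i=1}^{q} r_i(A); (3) r_q(A)^q ≤ R_q(A) ≤ q!·r_1(A)^{q−1}·r_q(A). -/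

import Mathlib

open MeasureTheory ProbabilityTheory MvPolynomial Filter Topology
open scoped ENNReal NNReal

noncomputable def gaussPi (ι : Type) [Fintype ι] : Measure (ι → ℝ) :=
  Measure.pi fun _ => gaussianReal 0 1

noncomputable def hermiteProd {K : ℕ} (k : Fin K → ℕ) : MvPolynomial (Fin K) ℝ :=
  ∏ i, Polynomial.aeval (MvPolynomial.X i) (Polynomial.hermite (k i))

noncomputable def chaos (K m : ℕ) : Submodule ℝ (MvPolynomial (Fin K) ℝ) :=
  Submodule.span ℝ {P | ∃ k : Fin K → ℕ, ∑ i, k i = m ∧ P = hermiteProd k}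

noncomputable def sqField {ι : Type} [Fintype ι] (P : MvPolynomial ι ℝ) (x : ι → ℝ) : ℝ :=
  ∑ i, (eval x (pderiv i P)) ^ 2

def TendstoInLaw {E : Type} [MeasurableSpace E] [TopologicalSpace E]
    (μs : ℕ → Measure E) (μ : Measure E) : Prop :=
  ∀ f : BoundedContinuousFunction E ℝ,
    Tendsto (fun n => ∫ x, f x ∂μs n) atTop (𝓝 (∫ x, f x ∂μ))

/-- `R_q` built from a list of eigenvalues:
`R_q(λ) = ∑_{i₁,…,i_q pairwise distinct} λ_{i₁}² ⋯ λ_{i_q}²` (so `R_0 = 1`). -/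
noncomputable def specRemOf {K : ℕ} (lam : Fin K → ℝ) (q : ℕ) : ℝ :=
  ∑ f : Fin q ↪ Fin K, ∏ j, (lam (f j)) ^ 2

/-- `r_j(λ) = ∑_{i ≥ j} λ_i²` for the eigenvalues listed in decreasing order of absolute value
(`1`-based indexing, so `r_1` is the full sum). -/
noncomputable def specTailOf {K : ℕ} (lam : Fin K → ℝ) (j : ℕ) : ℝ :=
  ∑ i ∈ Finset.univ.filter (fun i : Fin K => j ≤ (i : ℕ) + 1), (lam i) ^ 2

/-! Write `μᵢ = λᵢ²`. Splitting off the first entry of an injective `(q+1)`-tuple gives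
`R_{q+1} = ∑_{g : Fin q ↪ Fin K} (∏ⱼ μ_{g j}) · ∑_{x ∉ range g} μₓ`. Since `μ` is decreasing,
the indices outside a set of `q` indices carry at least the tail `r_{q+1}`, whence
`R_q r_{q+1} ≤ R_{q+1}`. Conversely, by pigeonhole every injective `(q+1)`-tuple has an entry
among the indices counted by `r_{q+1}`, and by symmetry of the coordinates it may be taken to be
the first one, whence `R_{q+1} ≤ (q+1) R_q r_{q+1}`. Iterating gives the product bounds, and
monotonicity of `j ↦ r_j` the bounds by powers. -/

open Finset

section
variable {ι M : Type*} [AddCommMonoid M] [LinearOrder M] [IsOrderedAddMonoid M]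

lemma sum_le_sum_of_card_le_of_forall_le {s t : Finset ι} {f : ι → M}
    (hcard : #s ≤ #t) (hf : ∀ x ∈ s, ∀ y ∈ t, f x ≤ f y) (ht : ∀ y ∈ t, 0 ≤ f y) :
    ∑ x ∈ s, f x ≤ ∑ y ∈ t, f y := by
  rcases t.eq_empty_or_nonempty with rfl | htne
  · simp [card_eq_zero.mp (Nat.le_zero.mp hcard)]
  obtain ⟨y₀, hy₀, hmin⟩ := t.exists_min_image f htne
  calc ∑ x ∈ s, f x ≤ #s • f y₀ := sum_le_card_nsmul _ _ _ fun x hx => hf x hx y₀ hy₀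
    _ ≤ #t • f y₀ := nsmul_le_nsmul_left (ht y₀ hy₀) hcard
    _ ≤ ∑ y ∈ t, f y := card_nsmul_le_sum _ _ _ hmin

lemma sum_le_sum_of_card_le_of_forall_not_mem_le [DecidableEq ι] {s t : Finset ι}
    {f : ι → M} (hcard : #s ≤ #t) (htop : ∀ x ∉ t, ∀ y ∈ t, f x ≤ f y)
    (ht : ∀ y ∈ t, 0 ≤ f y) : ∑ x ∈ s, f x ≤ ∑ y ∈ t, f y := by
  rw [← sum_inter_add_sum_sdiff s t, ← sum_inter_add_sum_sdiff t s, inter_comm]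
  refine add_le_add le_rfl (sum_le_sum_of_card_le_of_forall_le ?_ ?_ ?_)
  · exact card_sdiff_le_card_sdiff_iff.mpr hcard
  · exact fun x hx y hy => htop x (mem_sdiff.mp hx).2 y (mem_sdiff.mp hy).1
  · exact fun y hy => ht y (mem_sdiff.mp hy).1

end

lemma sum_embedding_succ {ι R : Type*} [Fintype ι] [DecidableEq ι] [CommSemiring R]
    (ψ μ : ι → R) (q : ℕ) :
    ∑ f : Fin (q + 1) ↪ ι, ψ (f 0) * ∏ j : Fin q, μ (f j.succ) =
      ∑ g : Fin q ↪ ι, (∏ j, μ (g j)) * ∑ x ∈ (univ.map g)ᶜ, ψ x := by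
  rw [← (Equiv.embeddingFinSucc q ι).symm.sum_comp, Fintype.sum_sigma]
  refine sum_congr rfl fun g _ => ?_
  rw [mul_sum]
  symm
  convert sum_subtype (univ.map g)ᶜ (p := fun x => x ∉ Set.range g) (by simp) _ using 2 with x
  simp [mul_comm]

lemma sum_embedding_apply_mul_prod_eq {ι R : Type*} [Fintype ι] [CommSemiring R]
    (ψ μ : ι → R) {n : ℕ} (i j : Fin n) :
    ∑ f : Fin n ↪ ι, ψ (f i) * ∏ k, μ (f k) = ∑ f : Fin n ↪ ι, ψ (f j) * ∏ k, μ (f k) := by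
  rw [← (Equiv.embeddingCongr (Equiv.swap i j) (Equiv.refl ι)).sum_comp]
  refine sum_congr rfl fun f _ => ?_
  have hcomp : ∀ k, Equiv.embeddingCongr (Equiv.swap i j) (Equiv.refl ι) f k =
      f (Equiv.swap i j k) := fun _ => rfl
  simp only [hcomp, Equiv.swap_apply_left, Equiv.prod_comp (Equiv.swap i j) fun k => μ (f k)]

lemma exists_le_embedding_apply {K q : ℕ} (f : Fin (q + 1) ↪ Fin K) : ∃ j, q ≤ (f j : ℕ) := by
  by_contra! h
  have := Fintype.card_le_of_injective (fun j => (⟨f j, h j⟩ : Fin q))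
    fun a b hab => f.injective (Fin.ext (Fin.mk.inj_iff.mp hab))
  simp at this

section
variable {R : Type*} [CommSemiring R] [PartialOrder R] [IsOrderedRing R] {f : ℕ → R}

lemma pow_le_prod_Icc_of_antitone (hf : Antitone f) (h0 : ∀ i, 0 ≤ f i) (q : ℕ) :
    f q ^ q ≤ ∏ i ∈ Icc 1 q, f i := by
  calc f q ^ q = ∏ _i ∈ Icc 1 q, f q := by simp
    _ ≤ ∏ i ∈ Icc 1 q, f i := prod_le_prod (fun _ _ => h0 q) fun i hi => hf (mem_Icc.mp hi).2

lemma prod_Icc_le_pow_mul_of_antitone (hf : Antitone f) (h0 : ∀ i, 0 ≤ f i) (q : ℕ) :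
    ∏ i ∈ Icc 1 (q + 1), f i ≤ f 1 ^ q * f (q + 1) := by
  rw [prod_Icc_succ_top (by omega)]
  gcongr
  · exact h0 _
  calc ∏ i ∈ Icc 1 q, f i ≤ ∏ _i ∈ Icc 1 q, f 1 :=
        prod_le_prod (fun i _ => h0 i) fun i hi => hf (mem_Icc.mp hi).1
    _ = f 1 ^ q := by simp
end

section
variable {K : ℕ}

lemma specRemOf_zero (lam : Fin K → ℝ) : specRemOf lam 0 = 1 := by
  simp [specRemOf]

lemma specTailOf_nonneg (lam : Fin K → ℝ) (j : ℕ) : 0 ≤ specTailOf lam j := by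
  unfold specTailOf
  positivity

lemma specTailOf_antitone (lam : Fin K → ℝ) : Antitone (specTailOf lam) := fun _ _ hjk =>
  sum_le_sum_of_subset_of_nonneg (monotone_filter_right _ fun _ _ => hjk.trans)
    fun _ _ _ => sq_nonneg _

lemma specTailOf_succ (lam : Fin K → ℝ) (q : ℕ) :
    specTailOf lam (q + 1) = ∑ i : Fin K with q ≤ i.val, lam i ^ 2 := by
  simp [specTailOf]

lemma specTailOf_succ_le_sum_compl {lam : Fin K → ℝ} (hlam : Antitone fun i => |lam i|)
    {s : Finset (Fin K)} {q : ℕ} (hs : #s ≤ q) :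
    specTailOf lam (q + 1) ≤ ∑ i ∈ sᶜ, lam i ^ 2 := by
  have hhead : ∑ i ∈ s, lam i ^ 2 ≤ ∑ i : Fin K with ¬ q ≤ i.val, lam i ^ 2 := by
    refine sum_le_sum_of_card_le_of_forall_not_mem_le ?_ ?_ fun _ _ => sq_nonneg _
    · simpa [Fin.card_filter_val_lt] using ⟨s.card_le_univ.trans_eq (by simp), hs⟩
    · intro x hx y hy
      simp only [mem_filter, mem_univ, true_and, not_le, not_lt] at hx hy
      exact sq_le_sq.mpr (hlam (Fin.le_def.mpr (hy.le.trans hx)))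
  have hsplit := sum_filter_add_sum_filter_not univ (fun i : Fin K => q ≤ (i : ℕ)) (lam · ^ 2)
  have hcompl := sum_compl_add_sum s (lam · ^ 2)
  rw [specTailOf_succ]
  linarith

lemma specRemOf_succ_eq (lam : Fin K → ℝ) (q : ℕ) :
    specRemOf lam (q + 1) =
      ∑ g : Fin q ↪ Fin K, (∏ j, lam (g j) ^ 2) * ∑ x ∈ (univ.map g)ᶜ, lam x ^ 2 := by
  rw [← sum_embedding_succ (lam · ^ 2) (lam · ^ 2)]
  simp [specRemOf, Fin.prod_univ_succ]

lemma specRemOf_mul_specTailOf_le {lam : Fin K → ℝ} (hlam : Antitone fun i => |lam i|)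
    (q : ℕ) : specRemOf lam q * specTailOf lam (q + 1) ≤ specRemOf lam (q + 1) := by
  rw [specRemOf_succ_eq, specRemOf, sum_mul]
  gcongr with g
  exact specTailOf_succ_le_sum_compl hlam (by simp)

lemma sum_embedding_ite_mul_prod_le (lam : Fin K → ℝ) (q : ℕ) :
    ∑ f : Fin (q + 1) ↪ Fin K, (if q ≤ (f 0).val then 1 else 0) * ∏ k, lam (f k) ^ 2 ≤
      specRemOf lam q * specTailOf lam (q + 1) := by
  set μ : Fin K → ℝ := (lam · ^ 2)
  set ψ : Fin K → ℝ := fun x => if q ≤ x.val then 1 else 0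
  calc _ = ∑ f : Fin (q + 1) ↪ Fin K, ψ (f 0) * μ (f 0) * ∏ j : Fin q, μ (f j.succ) := by
        simp only [Fin.prod_univ_succ, mul_assoc]; rfl
    _ = ∑ g : Fin q ↪ Fin K, (∏ j, μ (g j)) * ∑ x ∈ (univ.map g)ᶜ, ψ x * μ x :=
        sum_embedding_succ (fun x => ψ x * μ x) μ q
    _ ≤ ∑ g : Fin q ↪ Fin K, (∏ j, μ (g j)) * specTailOf lam (q + 1) := by
        gcongr with g
        rw [specTailOf_succ, sum_filter]
        simpa [ψ] using sum_le_univ_sum_of_nonneg (s := (univ.map g)ᶜ) (f := fun x => ψ x * μ x)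
          fun x => by positivity
    _ = specRemOf lam q * specTailOf lam (q + 1) := by rw [← sum_mul]; rfl

lemma specRemOf_succ_le (lam : Fin K → ℝ) (q : ℕ) :
    specRemOf lam (q + 1) ≤ (q + 1 : ℕ) * specRemOf lam q * specTailOf lam (q + 1) := by
  set μ : Fin K → ℝ := (lam · ^ 2)
  set ψ : Fin K → ℝ := fun x => if q ≤ x.val then 1 else 0
  have hcover (f : Fin (q + 1) ↪ Fin K) : ∏ k, μ (f k) ≤ ∑ j, ψ (f j) * ∏ k, μ (f k) := by
    obtain ⟨j, hj⟩ := exists_le_embedding_apply f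
    calc ∏ k, μ (f k) = ψ (f j) * ∏ k, μ (f k) := by simp [ψ, hj]
      _ ≤ ∑ j, ψ (f j) * ∏ k, μ (f k) :=
        single_le_sum (f := fun j => ψ (f j) * ∏ k, μ (f k))
          (fun _ _ => mul_nonneg (by positivity) (by positivity)) (mem_univ j)
  calc specRemOf lam (q + 1) = ∑ f : Fin (q + 1) ↪ Fin K, ∏ k, μ (f k) := rfl
    _ ≤ ∑ f : Fin (q + 1) ↪ Fin K, ∑ j, ψ (f j) * ∏ k, μ (f k) := sum_le_sum fun f _ => hcover f
    _ = ∑ _j : Fin (q + 1), ∑ f : Fin (q + 1) ↪ Fin K, ψ (f 0) * ∏ k, μ (f k) := by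
        rw [sum_comm]
        exact sum_congr rfl fun j _ => sum_embedding_apply_mul_prod_eq ψ μ j 0
    _ ≤ (q + 1 : ℕ) * (specRemOf lam q * specTailOf lam (q + 1)) := by
        rw [sum_const, card_univ, Fintype.card_fin, nsmul_eq_mul]
        gcongr
        exact sum_embedding_ite_mul_prod_le lam q
    _ = (q + 1 : ℕ) * specRemOf lam q * specTailOf lam (q + 1) := (mul_assoc ..).symm

lemma prod_specTailOf_le_specRemOf {lam : Fin K → ℝ} (hlam : Antitone fun i => |lam i|)
    (q : ℕ) : ∏ i ∈ Icc 1 q, specTailOf lam i ≤ specRemOf lam q := by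
  induction q with
  | zero => simp [specRemOf_zero]
  | succ q ih =>
    rw [prod_Icc_succ_top (by omega)]
    calc _ ≤ specRemOf lam q * specTailOf lam (q + 1) := by
          gcongr
          exact specTailOf_nonneg lam _
      _ ≤ specRemOf lam (q + 1) := specRemOf_mul_specTailOf_le hlam q

lemma specRemOf_le_factorial_mul_prod_specTailOf (lam : Fin K → ℝ) (q : ℕ) :
    specRemOf lam q ≤ q.factorial * ∏ i ∈ Icc 1 q, specTailOf lam i := by
  induction q with
  | zero => simp [specRemOf_zero]
  | succ q ih =>
    rw [prod_Icc_succ_top (by omega), Nat.factorial_succ, Nat.cast_mul]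
    calc _ ≤ (q + 1 : ℕ) * specRemOf lam q * specTailOf lam (q + 1) := specRemOf_succ_le lam q
      _ ≤ (q + 1 : ℕ) * (q.factorial * ∏ i ∈ Icc 1 q, specTailOf lam i) *
            specTailOf lam (q + 1) := by
          gcongr
          exact specTailOf_nonneg lam _
      _ = _ := by ring

end

theorem spectral_remainder_comparisons_general (q : ℕ) (hq : 1 ≤ q) (K : ℕ)
    (lam : Fin K → ℝ)
    (hsort : ∀ i j : Fin K, i ≤ j → |lam j| ≤ |lam i|) :
    (specRemOf lam (q - 1) * specTailOf lam q ≤ specRemOf lam q ∧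
      specRemOf lam q ≤ q * specRemOf lam (q - 1) * specTailOf lam q) ∧
    ((∏ i ∈ Finset.Icc 1 q, specTailOf lam i) ≤ specRemOf lam q ∧
      specRemOf lam q ≤ (q.factorial : ℝ) * ∏ i ∈ Finset.Icc 1 q, specTailOf lam i) ∧
    ((specTailOf lam q) ^ q ≤ specRemOf lam q ∧
      specRemOf lam q ≤ (q.factorial : ℝ) * (specTailOf lam 1) ^ (q - 1) * specTailOf lam q) := by
  obtain ⟨n, rfl⟩ : ∃ n, q = n + 1 := ⟨q - 1, by omega⟩
  rw [Nat.add_sub_cancel]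
  have hprod_le := prod_specTailOf_le_specRemOf hsort (n + 1)
  have hle_prod := specRemOf_le_factorial_mul_prod_specTailOf lam (n + 1)
  refine ⟨⟨specRemOf_mul_specTailOf_le hsort n, specRemOf_succ_le lam n⟩, ⟨hprod_le, hle_prod⟩,
    ?_, ?_⟩
  · exact (pow_le_prod_Icc_of_antitone (specTailOf_antitone lam) (specTailOf_nonneg lam) _).trans
      hprod_le
  · calc _ ≤ _ := hle_prod
      _ ≤ ((n + 1).factorial : ℝ) * (specTailOf lam 1 ^ n * specTailOf lam (n + 1)) := by
          gcongr
          exact prod_Icc_le_pow_mul_of_antitone (specTailOf_antitone lam) (specTailOf_nonneg lam) n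
      _ = _ := (mul_assoc ..).symm

/-- Comparison between the spectral remainders `R_q(A)` and the distances
`r_j(A)` to matrices of lower rank, for a symmetric matrix `A` with eigenvalues `λ` ordered by
decreasing absolute value:
`R_{q−1} r_q ≤ R_q ≤ q R_{q−1} r_q`, `∏_{i≤q} r_i ≤ R_q ≤ q! ∏_{i≤q} r_i`, and
`r_q^q ≤ R_q ≤ q! r_1^{q−1} r_q`. -/
theorem spectral_remainder_comparisons (q : ℕ) (hq : 1 ≤ q) (K : ℕ)
    (A : Matrix (Fin K) (Fin K) ℝ) (hA : A.IsHermitian) (lam : Fin K → ℝ)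
    (hperm : ∃ σ : Equiv.Perm (Fin K), ∀ i, lam i = hA.eigenvalues (σ i))
    (hsort : ∀ i j : Fin K, i ≤ j → |lam j| ≤ |lam i|) :
    (specRemOf lam (q - 1) * specTailOf lam q ≤ specRemOf lam q ∧
      specRemOf lam q ≤ q * specRemOf lam (q - 1) * specTailOf lam q) ∧
    ((∏ i ∈ Finset.Icc 1 q, specTailOf lam i) ≤ specRemOf lam q ∧
      specRemOf lam q ≤ (q.factorial : ℝ) * ∏ i ∈ Finset.Icc 1 q, specTailOf lam i) ∧
    ((specTailOf lam q) ^ q ≤ specRemOf lam q ∧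
      specRemOf lam q ≤ (q.factorial : ℝ) * (specTailOf lam 1) ^ (q - 1) * specTailOf lam q) :=
  spectral_remainder_comparisons_general q hq K lam hsort
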